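/- arXiv:1701.01024 — 9 statements merged into one kernel-verified Lean document; each statement's English description precedes it below -/
import Mathlib

section
/- For every natural number n, the n-th Bernoulli number satisfies B_n = \sum_{k=0}^{n} (-1)^k * k!/(k+1) * S(n,k), where S(n,k) denotes the Stirling numbers of the second kind. -/
/-- Stirling numbers of the second kind. -/
def stirling2 : ℕ → ℕ → ℕ
  | 0, 0 => 1
  | 0, _ + 1 => 0
  | _ + 1, 0 => 0
  | n + 1, k + 1 => stirling2 n k + (k + 1) * stirling2 n (k + 1)

section Helpers
open Finset Polynomial

lemma stirling2_eq_zero_of_lt : ∀ n k : ℕ, n < k → stirling2 n k = 0 := by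
  intro n
  induction n with
  | zero => intro k hk; match k, hk with | (j+1), _ => rfl
  | succ n ih =>
    intro k hk
    match k, hk with
    | (j+1), hk =>
      have h1 : stirling2 n j = 0 := ih j (by omega)
      have h2 : stirling2 n (j+1) = 0 := ih (j+1) (by omega)
      show stirling2 n j + (j + 1) * stirling2 n (j + 1) = 0
      rw [h1, h2]; ring

lemma hockey (k : ℕ) : ∀ x : ℕ, ∑ m ∈ range x, Nat.choose m k = Nat.choose x (k + 1) := by
  intro x
  induction x with
  | zero => simp
  | succ x ih => rw [Finset.sum_range_succ, ih, Nat.choose_succ_succ', Nat.add_comm]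

lemma pow_eq_sum_stirling (n m : ℕ) :
    m ^ n = ∑ k ∈ range (n + 1), Nat.factorial k * stirling2 n k * Nat.choose m k := by
  induction n with
  | zero => simp [stirling2]
  | succ n ih =>
    have key : ∀ k, m * Nat.choose m k = (k + 1) * Nat.choose m (k + 1) + k * Nat.choose m k := by
      intro k
      have h := Nat.choose_succ_right_eq m k
      rcases le_or_gt k m with h' | h'
      · have e1 : m * m.choose k = (m - k) * m.choose k + k * m.choose k := by
          rw [← Nat.add_mul, Nat.sub_add_cancel h']
        rw [e1, mul_comm (m-k), ← h]
        ring
      · rw [Nat.choose_eq_zero_of_lt h', Nat.choose_eq_zero_of_lt (by omega)]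
        omega
    have shift : ∑ k ∈ range (n + 1),
          Nat.factorial k * (k * stirling2 n k) * Nat.choose m k
        = ∑ k ∈ range (n + 1),
          Nat.factorial (k+1) * ((k+1) * stirling2 n (k+1)) * Nat.choose m (k+1) := by
      rw [Finset.sum_range_succ' (fun k => Nat.factorial k * (k * stirling2 n k) * Nat.choose m k),
        Finset.sum_range_succ (fun k => Nat.factorial (k+1) * ((k+1) * stirling2 n (k+1)) * Nat.choose m (k+1))]
      rw [stirling2_eq_zero_of_lt n (n+1) (by omega)]
      simp
    calc m ^ (n + 1) = m * m ^ n := by ring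
      _ = ∑ k ∈ range (n + 1), Nat.factorial k * stirling2 n k * (m * Nat.choose m k) := by
          rw [ih, Finset.mul_sum]; apply Finset.sum_congr rfl; intros; ring
      _ = ∑ k ∈ range (n + 1), (Nat.factorial (k+1) * stirling2 n k * Nat.choose m (k+1)
            + Nat.factorial k * (k * stirling2 n k) * Nat.choose m k) := by
          apply Finset.sum_congr rfl; intro k _
          rw [key k, Nat.factorial_succ]; ring
      _ = ∑ k ∈ range (n + 1), (Nat.factorial (k+1) * stirling2 n k * Nat.choose m (k+1)
            + Nat.factorial (k+1) * ((k+1) * stirling2 n (k+1)) * Nat.choose m (k+1)) := by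
          rw [Finset.sum_add_distrib, Finset.sum_add_distrib, shift]
      _ = ∑ k ∈ range (n + 1),
            Nat.factorial (k+1) * stirling2 (n+1) (k+1) * Nat.choose m (k+1) := by
          apply Finset.sum_congr rfl; intro k _
          show _ = Nat.factorial (k+1) * (stirling2 n k + (k + 1) * stirling2 n (k + 1)) * Nat.choose m (k+1)
          ring
      _ = ∑ k ∈ range (n + 2), Nat.factorial k * stirling2 (n+1) k * Nat.choose m k := by
          rw [Finset.sum_range_succ' (fun k => Nat.factorial k * stirling2 (n+1) k * Nat.choose m k)]
          show _ = _ + Nat.factorial 0 * stirling2 (n+1) 0 * Nat.choose m 0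
          show _ = _ + Nat.factorial 0 * 0 * Nat.choose m 0
          simp

lemma dp_coeff_zero (k : ℕ) : (descPochhammer ℚ (k+1)).coeff 0 = 0 := by
  rw [Polynomial.coeff_zero_eq_eval_zero, descPochhammer_eval_zero]
  simp

lemma dp_coeff_one : ∀ k : ℕ, (descPochhammer ℚ (k+1)).coeff 1 = (-1)^k * Nat.factorial k := by
  intro k
  induction k with
  | zero => simp [descPochhammer_one]
  | succ k ih =>
    rw [descPochhammer_succ_right, mul_sub, Polynomial.coeff_sub, Polynomial.coeff_mul_X,
      dp_coeff_zero, ← Polynomial.C_eq_natCast, Polynomial.coeff_mul_C, ih, Nat.factorial_succ]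
    push_cast
    ring

lemma bernoulli_eq_sum_stirling_aux (n : ℕ) :
    _root_.bernoulli n = ∑ k ∈ Finset.range (n + 1),
      (-1 : ℚ) ^ k * (Nat.factorial k : ℚ) / (k + 1) * (stirling2 n k : ℚ) := by
  set P : Polynomial ℚ := ∑ i ∈ range (n+1),
    Polynomial.C (_root_.bernoulli i * ((n+1).choose i) / (n+1)) * Polynomial.X ^ (n+1-i) with hP
  set Q : Polynomial ℚ := ∑ k ∈ range (n+1),
    Polynomial.C ((Nat.factorial k * stirling2 n k : ℕ) / (Nat.factorial (k+1) : ℚ))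
      * descPochhammer ℚ (k+1) with hQ
  have heval : ∀ x : ℕ, P.eval (x : ℚ) = Q.eval (x : ℚ) := by
    intro x
    have hPval : P.eval (x : ℚ) = ∑ m ∈ range x, (m : ℚ) ^ n := by
      rw [hP, Polynomial.eval_finset_sum, sum_range_pow x n]
      apply Finset.sum_congr rfl; intro i _
      rw [Polynomial.eval_mul, Polynomial.eval_C, Polynomial.eval_pow, Polynomial.eval_X]
      ring
    have hQval : Q.eval (x : ℚ) = ∑ m ∈ range x, (m : ℚ) ^ n := by
      rw [hQ, Polynomial.eval_finset_sum]
      have : ∀ k ∈ range (n+1),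
          Polynomial.eval (x:ℚ) (Polynomial.C ((Nat.factorial k * stirling2 n k : ℕ) / (Nat.factorial (k+1) : ℚ))
            * descPochhammer ℚ (k+1))
          = ((Nat.factorial k * stirling2 n k * Nat.choose x (k+1) : ℕ) : ℚ) := by
        intro k _
        rw [Polynomial.eval_mul, Polynomial.eval_C, descPochhammer_eval_eq_descFactorial,
          Nat.descFactorial_eq_factorial_mul_choose]
        have h0 : (Nat.factorial (k+1) : ℚ) ≠ 0 := by
          exact_mod_cast Nat.factorial_ne_zero (k+1)
        push_cast
        field_simp
      rw [Finset.sum_congr rfl this]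
      rw [← Nat.cast_sum]
      have : ∑ k ∈ range (n+1), Nat.factorial k * stirling2 n k * Nat.choose x (k+1)
          = ∑ m ∈ range x, m ^ n := by
        have swap : ∑ k ∈ range (n+1), Nat.factorial k * stirling2 n k * Nat.choose x (k+1)
            = ∑ k ∈ range (n+1), ∑ m ∈ range x, Nat.factorial k * stirling2 n k * Nat.choose m k := by
          apply Finset.sum_congr rfl; intro k _
          rw [← hockey k x, Finset.mul_sum]
        rw [swap, Finset.sum_comm]
        apply Finset.sum_congr rfl; intro m _
        exact (pow_eq_sum_stirling n m).symm
      rw [this]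
      push_cast
      rfl
    rw [hPval, hQval]
  have hPQ : P = Q := by
    apply Polynomial.eq_of_infinite_eval_eq
    apply Set.Infinite.mono (s := Set.range (Nat.cast : ℕ → ℚ))
    · rintro _ ⟨x, rfl⟩; exact heval x
    · exact Set.infinite_range_of_injective Nat.cast_injective
  have hcoeffP : P.coeff 1 = _root_.bernoulli n := by
    rw [hP, Polynomial.finset_sum_coeff]
    rw [Finset.sum_eq_single n]
    · have e1 : n + 1 - n = 1 := by omega
      rw [e1, Polynomial.coeff_C_mul, Polynomial.coeff_X_pow, if_pos rfl, mul_one,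
        Nat.choose_succ_self_right]
      have h1 : ((n : ℚ) + 1) ≠ 0 := by positivity
      push_cast
      field_simp
    · intro i hi hne
      have hi' := Finset.mem_range.mp hi
      rw [Polynomial.coeff_C_mul, Polynomial.coeff_X_pow, if_neg (by omega), mul_zero]
    · intro h; exact absurd (self_mem_range_succ n) h
  have hcoeffQ : Q.coeff 1 = ∑ k ∈ range (n+1),
      (-1 : ℚ) ^ k * (Nat.factorial k : ℚ) / (k + 1) * (stirling2 n k : ℚ) := by
    rw [hQ, Polynomial.finset_sum_coeff]
    apply Finset.sum_congr rfl
    intro k _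
    rw [Polynomial.coeff_C_mul, dp_coeff_one]
    have h0 : (Nat.factorial k : ℚ) ≠ 0 := by exact_mod_cast Nat.factorial_ne_zero k
    have h1 : ((k : ℚ) + 1) ≠ 0 := by positivity
    rw [Nat.factorial_succ]
    push_cast
    field_simp
  rw [← hcoeffP, hPQ, hcoeffQ]

end Helpers

theorem bernoulli_eq_sum_stirling (n : ℕ) :
    bernoulli n = ∑ k ∈ Finset.range (n + 1),
      (-1 : ℚ) ^ k * (Nat.factorial k : ℚ) / (k + 1) * (stirling2 n k : ℚ) :=
  bernoulli_eq_sum_stirling_aux n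
end

section
/- For every natural number n, the value of the n-th Euler polynomial at 0 satisfies E_n(0) = \sum_{k=0}^{n} (-1)^k * k!/2^k * S(n,k), where S(n,k) are Stirling numbers of the second kind. -/
/-- The Euler polynomials, via the recurrence obtained from the generating
function `2 e^{xt}/(e^t + 1) = ∑ E_n(x) t^n/n!`, i.e.
`∑_{k=0}^{n} C(n,k) E_k(x) + E_n(x) = 2 x^n`. -/
noncomputable def eulerPoly (n : ℕ) (x : ℝ) : ℝ :=
  x ^ n - 2⁻¹ * ∑ k ∈ (Finset.range n).attach, (n.choose k.1 : ℝ) * eulerPoly k.1 x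
termination_by n
decreasing_by exact Finset.mem_range.mp k.2

lemma stirling2_zero_right (n : ℕ) : stirling2 n 0 = if n = 0 then 1 else 0 := by
  cases n <;> simp [stirling2]

lemma stirling2_eq_zero {n k : ℕ} (h : n < k) : stirling2 n k = 0 := by
  induction n generalizing k with
  | zero => obtain ⟨k, rfl⟩ := Nat.exists_eq_add_of_lt h; simp [stirling2]
  | succ n ih =>
    obtain ⟨m, rfl⟩ : ∃ m, k = m + 1 := ⟨k - 1, by omega⟩
    rw [stirling2, ih (by omega), ih (by omega)]; ring

lemma sum_choose_stirling (n k : ℕ) :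
    ∑ j ∈ Finset.range (n + 1), n.choose j * stirling2 j k = stirling2 (n + 1) (k + 1) := by
  induction n generalizing k with
  | zero => cases k <;> simp [stirling2]
  | succ n ih =>
    rw [Finset.sum_range_succ']
    have hA : ∀ j ∈ Finset.range (n + 1),
        (n + 1).choose (j + 1) * stirling2 (j + 1) k
          = n.choose j * stirling2 (j + 1) k + n.choose (j + 1) * stirling2 (j + 1) k := by
      intro j _; rw [Nat.choose_succ_succ]; ring
    rw [Finset.sum_congr rfl hA, Finset.sum_add_distrib]
    have h2 : (∑ j ∈ Finset.range (n + 1), n.choose (j + 1) * stirling2 (j + 1) k)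
        + n.choose 0 * stirling2 0 k = stirling2 (n + 1) (k + 1) := by
      rw [← Finset.sum_range_succ' (fun j => n.choose j * stirling2 j k) (n + 1),
        Finset.sum_range_succ, Nat.choose_succ_self, ← ih k]
      ring
    cases k with
    | zero =>
      have hz : ∀ j ∈ Finset.range (n + 1), n.choose j * stirling2 (j + 1) 0 = 0 := by
        intro j _; simp [stirling2]
      rw [Finset.sum_congr rfl hz, Finset.sum_const_zero]
      simp only [Nat.choose_zero_right, one_mul] at h2 ⊢
      have h3 : stirling2 (n + 1 + 1) (0 + 1) = stirling2 (n + 1) 0 + 1 * stirling2 (n + 1) 1 := rfl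
      have h4 : stirling2 (n + 1) 0 = 0 := rfl
      have h5 : stirling2 0 0 = 1 := rfl
      rw [h3, h4, h5]
      simp only [Nat.zero_add] at h2 ⊢
      omega
    | succ m =>
      have hz : ∀ j ∈ Finset.range (n + 1), n.choose j * stirling2 (j + 1) (m + 1)
          = n.choose j * stirling2 j m + (m + 1) * (n.choose j * stirling2 j (m + 1)) := by
        intro j _; rw [stirling2]; ring
      rw [Finset.sum_congr rfl hz, Finset.sum_add_distrib, ← Finset.mul_sum, ih, ih]
      have h3 : stirling2 (n + 1 + 1) (m + 1 + 1)
          = stirling2 (n + 1) (m + 1) + (m + 2) * stirling2 (n + 1) (m + 2) := rfl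
      have h4 : stirling2 0 (m + 1) = 0 := rfl
      rw [h4, mul_zero, add_zero] at h2
      have h6 : (m : ℕ) + 1 + 1 = m + 2 := rfl
      rw [h3, h2, h4, h6]
      ring


noncomputable def ec (k : ℕ) : ℝ := (-1 : ℝ) ^ k * (Nat.factorial k : ℝ) / 2 ^ k

lemma ec_zero : ec 0 = 1 := by simp [ec]

lemma ec_succ (k : ℕ) : ec k * (k + 1) = -2 * ec (k + 1) := by
  simp only [ec, pow_succ, Nat.factorial_succ]
  push_cast
  field_simp

noncomputable def fS (n : ℕ) : ℝ := ∑ k ∈ Finset.range (n + 1), ec k * (stirling2 n k : ℝ)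

lemma key (n : ℕ) :
    (∑ j ∈ Finset.range (n + 1), (n.choose j : ℝ) * fS j) + fS n
      = if n = 0 then 2 else 0 := by
  have hext : ∀ j ∈ Finset.range (n + 1), (n.choose j : ℝ) * fS j
      = ∑ k ∈ Finset.range (n + 1), (n.choose j : ℝ) * (ec k * (stirling2 j k : ℝ)) := by
    intro j hj
    rw [fS, Finset.mul_sum]
    apply Finset.sum_subset
    · apply Finset.range_subset_range.mpr
      have := Finset.mem_range.mp hj; omega
    · intro k _ hk
      simp only [Finset.mem_range] at hk
      rw [stirling2_eq_zero (show j < k by omega)]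
      simp
  rw [Finset.sum_congr rfl hext, Finset.sum_comm]
  have hcast : ∀ k ∈ Finset.range (n + 1),
      ∑ j ∈ Finset.range (n + 1), (n.choose j : ℝ) * (ec k * (stirling2 j k : ℝ))
        = ec k * (stirling2 (n + 1) (k + 1) : ℝ) := by
    intro k _
    have h := sum_choose_stirling n k
    calc ∑ j ∈ Finset.range (n + 1), (n.choose j : ℝ) * (ec k * (stirling2 j k : ℝ))
        = ec k * ∑ j ∈ Finset.range (n + 1), ((n.choose j * stirling2 j k : ℕ) : ℝ) := by
          rw [Finset.mul_sum]; apply Finset.sum_congr rfl; intro j _; push_cast; ring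
      _ = ec k * (stirling2 (n + 1) (k + 1) : ℝ) := by rw [← Nat.cast_sum, h]
  rw [Finset.sum_congr rfl hcast, fS, ← Finset.sum_add_distrib]
  have hterm : ∀ k ∈ Finset.range (n + 1),
      ec k * (stirling2 (n + 1) (k + 1) : ℝ) + ec k * (stirling2 n k : ℝ)
        = 2 * (ec k * (stirling2 n k : ℝ)) + (-2 * ec (k + 1)) * (stirling2 n (k + 1) : ℝ) := by
    intro k _
    have hs : (stirling2 (n + 1) (k + 1) : ℝ)
        = (stirling2 n k : ℝ) + ((k : ℝ) + 1) * (stirling2 n (k + 1) : ℝ) := by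
      rw [stirling2]; push_cast; ring
    rw [hs, ← ec_succ]; ring
  rw [Finset.sum_congr rfl hterm, Finset.sum_add_distrib, ← Finset.mul_sum]
  have hshift : ∑ k ∈ Finset.range (n + 1), (-2 * ec (k + 1)) * (stirling2 n (k + 1) : ℝ)
      = -2 * (fS n - ec 0 * (stirling2 n 0 : ℝ)) := by
    have h1 : ∑ k ∈ Finset.range (n + 2), ec k * (stirling2 n k : ℝ)
        = (∑ k ∈ Finset.range (n + 1), ec (k + 1) * (stirling2 n (k + 1) : ℝ))
          + ec 0 * (stirling2 n 0 : ℝ) :=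
      Finset.sum_range_succ' (fun k => ec k * (stirling2 n k : ℝ)) (n + 1)
    have h2 : ∑ k ∈ Finset.range (n + 2), ec k * (stirling2 n k : ℝ) = fS n := by
      rw [Finset.sum_range_succ, stirling2_eq_zero (Nat.lt_succ_self n), fS]
      simp
    have h3 : ∑ k ∈ Finset.range (n + 1), ec (k + 1) * (stirling2 n (k + 1) : ℝ)
        = fS n - ec 0 * (stirling2 n 0 : ℝ) := by rw [← h2, h1]; ring
    calc ∑ k ∈ Finset.range (n + 1), (-2 * ec (k + 1)) * (stirling2 n (k + 1) : ℝ)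
        = -2 * ∑ k ∈ Finset.range (n + 1), ec (k + 1) * (stirling2 n (k + 1) : ℝ) := by
          rw [Finset.mul_sum]; apply Finset.sum_congr rfl; intro k _; ring
      _ = -2 * (fS n - ec 0 * (stirling2 n 0 : ℝ)) := by rw [h3]
  rw [hshift, ec_zero, stirling2_zero_right, fS]
  by_cases hn : n = 0 <;> simp [hn] <;> ring

theorem eulerPoly_zero_eq_sum_stirling (n : ℕ) :
    eulerPoly n 0 = ∑ k ∈ Finset.range (n + 1),
      (-1 : ℝ) ^ k * (Nat.factorial k : ℝ) / 2 ^ k * (stirling2 n k : ℝ) := by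
  have main : ∀ n : ℕ, eulerPoly n 0 = fS n := by
    intro n
    induction n using Nat.strong_induction_on with
    | _ n ih =>
      rw [eulerPoly, Finset.sum_attach (Finset.range n)
        (fun j => (n.choose j : ℝ) * eulerPoly j 0)]
      have hsum : ∑ j ∈ Finset.range n, (n.choose j : ℝ) * eulerPoly j 0
          = ∑ j ∈ Finset.range n, (n.choose j : ℝ) * fS j := by
        apply Finset.sum_congr rfl; intro j hj; rw [ih j (Finset.mem_range.mp hj)]
      rw [hsum]
      have hk := key n
      rw [Finset.sum_range_succ, Nat.choose_self] at hk
      have hz : (0 : ℝ) ^ n = if n = 0 then 1 else 0 := by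
        by_cases hn : n = 0 <;> simp [hn]
      rw [hz]
      by_cases hn : n = 0
      · subst hn; simp at hk ⊢; linarith
      · simp only [hn, if_false] at hk ⊢; push_cast at hk; linarith
  rw [main]
  apply Finset.sum_congr rfl; intro k _; rw [ec]
end

section
/- The infinite series \sum_{k=2}^{\infty} k * \zeta(k)/2^k converges and equals \log 2 + (3/4)\zeta(2), where \zeta is the Riemann zeta function. -/
/-- The Riemann zeta function at a natural number argument, `ζ(s) = ∑_{m≥1} 1/m^s`. -/
noncomputable def zetaNat (s : ℕ) : ℝ := ∑' m : ℕ, 1 / ((m : ℝ) + 1) ^ s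

open Finset Filter Real

private lemma summable_zetaAux (p : ℕ) :
    Summable (fun m : ℕ => 1 / ((m : ℝ) + 1) ^ (p + 2)) := by
  have h2 : Summable (fun m : ℕ => 1 / ((m : ℝ) + 1) ^ 2) := by
    have := (summable_nat_add_iff 1).mpr
      (summable_one_div_nat_pow.mpr (by norm_num : 1 < 2))
    simpa using this
  refine h2.of_nonneg_of_le (fun m => by positivity) (fun m => ?_)
  apply one_div_le_one_div_of_le (by positivity)
  exact pow_le_pow_right₀ (by simp [Nat.cast_nonneg] : (1:ℝ) ≤ (m:ℝ) + 1) (by omega)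

private lemma hasSum_zetaAux (p : ℕ) :
    HasSum (fun m : ℕ => 1 / ((m : ℝ) + 1) ^ (p + 2)) (zetaNat (p + 2)) :=
  (summable_zetaAux p).hasSum

private lemma hasSum_geomDeriv {y : ℝ} (h0 : 0 < y) (h1 : y < 1) :
    HasSum (fun k : ℕ => ((k : ℝ) + 2) * y ^ (k + 2)) (y / (1 - y) ^ 2 - y) := by
  have h := hasSum_coe_mul_geometric_of_norm_lt_one (r := y)
    (by rw [Real.norm_eq_abs, abs_of_pos h0]; exact h1)
  have h2 := (hasSum_nat_add_iff' (f := fun n : ℕ => (n : ℝ) * y ^ n) 2).mpr h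
  simp only [Finset.sum_range_succ, Finset.sum_range_zero] at h2
  norm_num at h2
  refine h2.congr_fun fun k => ?_
  ring_nf

private lemma hasSum_logTwo :
    HasSum (fun m : ℕ => 1 / (2 * (m : ℝ) + 1) - 1 / (2 * (m : ℝ) + 2)) (Real.log 2) := by
  have hnn : ∀ m : ℕ, 0 ≤ 1 / (2 * (m : ℝ) + 1) - 1 / (2 * (m : ℝ) + 2) := by
    intro m
    rw [sub_nonneg]
    apply one_div_le_one_div_of_le
    · positivity
    · linarith
  rw [hasSum_iff_tendsto_nat_of_nonneg hnn]
  have key : ∀ n : ℕ, ∑ m ∈ Finset.range n, (1 / (2 * (m : ℝ) + 1) - 1 / (2 * (m : ℝ) + 2))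
      = ((harmonic (2 * n) : ℚ) : ℝ) - ((harmonic n : ℚ) : ℝ) := by
    intro n
    induction n with
    | zero => simp
    | succ n ih =>
      rw [Finset.sum_range_succ, ih, show 2 * (n+1) = (2*n+1)+1 from by ring,
        harmonic_succ, harmonic_succ, harmonic_succ]
      have h1 : (2*(n:ℝ)+1) ≠ 0 := by positivity
      have h2 : (2*(n:ℝ)+2) ≠ 0 := by positivity
      have h3 : ((n:ℝ)+1) ≠ 0 := by positivity
      push_cast
      field_simp
      ring
  simp only [key]
  have t2 : Tendsto (fun n : ℕ => 2 * n) atTop atTop := by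
    apply tendsto_atTop_mono _ tendsto_id
    intro n; simp only [id_eq]; omega
  have h2n := Real.tendsto_harmonic_sub_log.comp t2
  have hdiff := (h2n.sub Real.tendsto_harmonic_sub_log).add_const (Real.log 2)
  rw [sub_self, zero_add] at hdiff
  apply hdiff.congr'
  filter_upwards [eventually_ge_atTop 1] with n hn
  have hn0 : (n:ℝ) ≠ 0 := by
    exact_mod_cast (Nat.pos_of_ne_zero (by omega)).ne'
  simp only [Function.comp]
  rw [Nat.cast_mul, Nat.cast_ofNat, Real.log_mul two_ne_zero hn0]
  ring

private lemma hasSum_oddSq :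
    HasSum (fun m : ℕ => 1 / (2 * (m : ℝ) + 1) ^ 2) (3 / 4 * zetaNat 2) := by
  have hz : HasSum (fun m : ℕ => 1 / ((m : ℝ) + 1) ^ 2) (zetaNat 2) := hasSum_zetaAux 0
  have he : Summable (fun k : ℕ => 1 / (((2 * k : ℕ) : ℝ) + 1) ^ 2) :=
    hz.summable.comp_injective (mul_right_injective₀ two_ne_zero)
  have ho : HasSum (fun k : ℕ => 1 / (((2 * k + 1 : ℕ) : ℝ) + 1) ^ 2) (1 / 4 * zetaNat 2) := by
    refine (hz.mul_left (1 / 4)).congr_fun fun k => ?_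
    have h3 : ((k:ℝ)+1) ≠ 0 := by positivity
    push_cast
    field_simp
    ring
  obtain ⟨A, hA⟩ := he
  have htot : HasSum (fun m : ℕ => 1 / ((m : ℝ) + 1) ^ 2) (A + 1 / 4 * zetaNat 2) :=
    HasSum.even_add_odd (f := fun m : ℕ => 1 / ((m : ℝ) + 1) ^ 2) hA ho
  have hAval : A = 3 / 4 * zetaNat 2 := by
    have := hz.unique htot
    linarith
  rw [hAval] at hA
  refine hA.congr_fun fun k => ?_
  push_cast
  ring_nf

theorem sum_mul_zeta_div_two_pow :
    HasSum (fun k : ℕ => ((k : ℝ) + 2) * zetaNat (k + 2) / 2 ^ (k + 2))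
      (Real.log 2 + 3 / 4 * zetaNat 2) := by
  set g : ℕ × ℕ → ℝ :=
    fun p => ((p.1 : ℝ) + 2) / (((p.2 : ℝ) + 1) ^ (p.1 + 2) * 2 ^ (p.1 + 2)) with hg_def
  have fiberK : ∀ k : ℕ, HasSum (fun m => g (k, m))
      (((k:ℝ)+2) * zetaNat (k+2) / 2 ^ (k+2)) := by
    intro k
    have h := (hasSum_zetaAux k).mul_left (((k:ℝ)+2) / 2 ^ (k+2))
    have h2 : (((k:ℝ)+2) / 2 ^ (k+2)) * zetaNat (k+2)
        = ((k:ℝ)+2) * zetaNat (k+2) / 2 ^ (k+2) := by ring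
    rw [h2] at h
    refine h.congr_fun fun m => ?_
    have hm : ((m:ℝ)+1) ≠ 0 := by positivity
    simp only [hg_def]
    field_simp
  have fiberM : ∀ m : ℕ, HasSum (fun k => g (k, m))
      ((1 / (2 * (m:ℝ) + 1) - 1 / (2 * (m:ℝ) + 2)) + 1 / (2 * (m:ℝ) + 1) ^ 2) := by
    intro m
    have hy0 : (0:ℝ) < 1 / (2 * ((m:ℝ)+1)) := by positivity
    have hy1 : 1 / (2 * ((m:ℝ)+1)) < 1 := by
      rw [div_lt_one (by positivity)]
      have : (0:ℝ) ≤ (m:ℝ) := Nat.cast_nonneg m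
      linarith
    have h := hasSum_geomDeriv hy0 hy1
    have hm1 : (2*(m:ℝ)+1) ≠ 0 := by positivity
    have hm2 : ((m:ℝ)+1) ≠ 0 := by positivity
    have hm3 : (2*(m:ℝ)+2) ≠ 0 := by positivity
    have hval : (1 / (2 * ((m:ℝ)+1))) / (1 - 1 / (2 * ((m:ℝ)+1))) ^ 2 - 1 / (2 * ((m:ℝ)+1))
        = (1 / (2 * (m:ℝ) + 1) - 1 / (2 * (m:ℝ) + 2)) + 1 / (2 * (m:ℝ) + 1) ^ 2 := by
      rw [show 1 - 1 / (2 * ((m:ℝ)+1)) = (2*(m:ℝ)+1) / (2*((m:ℝ)+1)) from by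
        field_simp
        ring]
      field_simp
      ring
    rw [hval] at h
    refine h.congr_fun fun k => ?_
    simp only [hg_def]
    rw [div_pow, one_pow, mul_pow]
    field_simp
  have hζ : ∀ s, 0 ≤ zetaNat s := fun s => tsum_nonneg fun m => by positivity
  have hnn : ∀ p : ℕ × ℕ, 0 ≤ g p := fun p => by simp only [hg_def]; positivity
  have hbound : ∀ k : ℕ, zetaNat (k + 2) ≤ zetaNat 2 := by
    intro k
    have h02 : zetaNat 2 = zetaNat (0 + 2) := by norm_num
    rw [h02]
    refine Summable.tsum_le_tsum (fun m => ?_) (summable_zetaAux k) (summable_zetaAux 0)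
    apply one_div_le_one_div_of_le (by positivity)
    exact pow_le_pow_right₀ (by simp [Nat.cast_nonneg] : (1:ℝ) ≤ (m:ℝ)+1) (by omega)
  have hgeo : Summable (fun k : ℕ => ((k:ℝ)+2) * (1/2:ℝ) ^ (k+2)) :=
    (hasSum_geomDeriv (by norm_num) (by norm_num)).summable
  have Sg : Summable g := by
    rw [summable_prod_of_nonneg hnn]
    refine ⟨fun k => (fiberK k).summable, ?_⟩
    have hsum : ∀ k : ℕ, ∑' m, g (k, m) = ((k:ℝ)+2) * zetaNat (k+2) / 2 ^ (k+2) :=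
      fun k => (fiberK k).tsum_eq
    refine Summable.of_nonneg_of_le (fun k => ?_) (fun k => ?_) (hgeo.mul_left (zetaNat 2))
    · rw [hsum k]
      apply div_nonneg (mul_nonneg (by positivity) (hζ _)) (by positivity)
    · rw [hsum k]
      calc ((k:ℝ)+2) * zetaNat (k+2) / 2 ^ (k+2)
          ≤ ((k:ℝ)+2) * zetaNat 2 / 2 ^ (k+2) := by
            gcongr
            exact hbound k
        _ = zetaNat 2 * (((k:ℝ)+2) * (1/2:ℝ) ^ (k+2)) := by
            rw [div_pow, one_pow]
            ring
  have hG : HasSum g (∑' p, g p) := Sg.hasSum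
  have hA : HasSum (fun k : ℕ => ((k:ℝ)+2) * zetaNat (k+2) / 2 ^ (k+2)) (∑' p, g p) :=
    hG.prod_fiberwise fiberK
  have hswap : HasSum (fun p : ℕ × ℕ => g (p.2, p.1)) (∑' p, g p) :=
    ((Equiv.prodComm ℕ ℕ).hasSum_iff).mpr hG
  have hB : HasSum (fun m : ℕ =>
      (1 / (2 * (m:ℝ) + 1) - 1 / (2 * (m:ℝ) + 2)) + 1 / (2 * (m:ℝ) + 1) ^ 2)
      (∑' p, g p) := hswap.prod_fiberwise fun m => fiberM m
  have hB' := hasSum_logTwo.add hasSum_oddSq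
  rw [hB.unique hB'] at hA
  exact hA
end

section
/- The infinite series \sum_{k=2}^{\infty} k^2 * \zeta(k)/2^k converges and equals \log 2 + (9/4)\zeta(2) + (14/8)\zeta(3). -/
open Real Filter Topology Finset

theorem hasSum_sq_mul_geometric {𝕜 : Type*} [NormedField 𝕜] {r : 𝕜} (hr : ‖r‖ < 1) :
    HasSum (fun n : ℕ => (n : 𝕜) ^ 2 * r ^ n) (r * (1 + r) / (1 - r) ^ 3) := by
  have hr1 : 1 - r ≠ 0 := sub_ne_zero.2 fun h => by simp [← h] at hr
  -- `n ^ 2 = 2 * (n + 2).choose 2 - 3 * (n + 1).choose 1 + n.choose 0`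
  have hchoose_sum := (((hasSum_choose_mul_geometric_of_norm_lt_one 2 hr).mul_left 2).sub
    ((hasSum_choose_mul_geometric_of_norm_lt_one 1 hr).mul_left 3)).add
    (hasSum_choose_mul_geometric_of_norm_lt_one 0 hr)
  rw [show r * (1 + r) / (1 - r) ^ 3
      = 2 * (1 / (1 - r) ^ (2 + 1)) - 3 * (1 / (1 - r) ^ (1 + 1)) + 1 / (1 - r) ^ (0 + 1) by
    field_simp; ring]
  refine hchoose_sum.congr_fun fun n => ?_
  have hchoose := congrArg (Nat.cast (R := 𝕜)) (Nat.add_one_mul_choose_eq (n + 1) 1)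
  push_cast [Nat.choose_one_right, Nat.choose_zero_right] at hchoose ⊢
  linear_combination r ^ n * hchoose

theorem hasSum_sq_mul_geometric_add_two {𝕜 : Type*} [NormedField 𝕜] {r : 𝕜} (hr : ‖r‖ < 1) :
    HasSum (fun k : ℕ => ((k : 𝕜) + 2) ^ 2 * r ^ (k + 2)) (r * (1 + r) / (1 - r) ^ 3 - r) := by
  have h := (hasSum_nat_add_iff' (f := fun n : ℕ => (n : 𝕜) ^ 2 * r ^ n) 2).2
    (hasSum_sq_mul_geometric hr)
  rw [sum_range_succ, sum_range_one] at h
  push_cast at h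
  simpa using h

theorem hasSum_one_div_nat_add_one_pow {s : ℕ} (hs : 1 < s) :
    HasSum (fun m : ℕ => 1 / ((m : ℝ) + 1) ^ s) (zetaNat s) := by
  have h := (summable_nat_add_iff 1).2 (Real.summable_one_div_nat_pow.2 hs)
  push_cast at h
  exact h.hasSum

theorem hasSum_one_div_two_mul_add_one_pow {s : ℕ} (hs : 1 < s) :
    HasSum (fun m : ℕ => 1 / (2 * (m : ℝ) + 1) ^ s) ((1 - 1 / 2 ^ s) * zetaNat s) := by
  set f : ℕ → ℝ := fun m => 1 / ((m : ℝ) + 1) ^ s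
  have hf : HasSum f (zetaNat s) := hasSum_one_div_nat_add_one_pow hs
  have hodd : HasSum (fun m => f (2 * m + 1)) (1 / 2 ^ s * zetaNat s) := by
    refine (hf.mul_left (1 / 2 ^ s)).congr_fun fun m => ?_
    simp only [f]
    push_cast
    rw [show (2 : ℝ) * m + 1 + 1 = 2 * ((m : ℝ) + 1) by ring, mul_pow, one_div_mul_one_div]
  have heven := (hf.summable.comp_injective (mul_right_injective₀ two_ne_zero)).hasSum
  have htotal := (heven.even_add_odd hodd).unique hf
  rw [show ∑' m, (f ∘ (2 * ·)) m = (1 - 1 / 2 ^ s) * zetaNat s by linear_combination htotal]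
    at heven
  refine heven.congr_fun fun m => ?_
  simp [f]

theorem sum_range_one_div_sub_one_div_eq_harmonic_sub (N : ℕ) :
    ∑ m ∈ range N, (1 / (2 * (m : ℝ) + 1) - 1 / (2 * (m : ℝ) + 2))
      = harmonic (2 * N) - harmonic N := by
  induction N with
  | zero => simp
  | succ n ih =>
    rw [sum_range_succ, ih, show 2 * (n + 1) = 2 * n + 1 + 1 by ring, harmonic_succ,
      harmonic_succ, harmonic_succ]
    push_cast
    field_simp
    ring

theorem tendsto_harmonic_two_mul_sub_harmonic :
    Tendsto (fun N : ℕ => (harmonic (2 * N) - harmonic N : ℝ)) atTop (𝓝 (log 2)) := by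
  have h2N := tendsto_harmonic_sub_log.comp (tendsto_id.const_mul_atTop' two_pos)
  have hdiff := (h2N.sub tendsto_harmonic_sub_log).add_const (log 2)
  rw [sub_self, zero_add] at hdiff
  refine hdiff.congr' ?_
  filter_upwards [eventually_ne_atTop 0] with N hN
  simp only [Function.comp_apply, id, Nat.cast_mul, Nat.cast_ofNat]
  rw [log_mul two_ne_zero (Nat.cast_ne_zero.2 hN)]
  ring

theorem hasSum_one_div_sub_one_div_log_two :
    HasSum (fun m : ℕ => 1 / (2 * (m : ℝ) + 1) - 1 / (2 * (m : ℝ) + 2)) (log 2) := by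
  refine (hasSum_iff_tendsto_nat_of_nonneg (fun m => ?_) _).2 ?_
  · exact sub_nonneg.2 (by gcongr; linarith)
  · simpa only [sum_range_one_div_sub_one_div_eq_harmonic_sub]
      using tendsto_harmonic_two_mul_sub_harmonic

theorem HasSum.of_hasSum_prod_fiberwise_of_nonneg {β γ : Type*} {f : β × γ → ℝ} (hf : 0 ≤ f)
    {g : β → ℝ} {h : γ → ℝ} {a : ℝ} (hg : ∀ b, HasSum (fun c => f (b, c)) (g b))
    (hh : ∀ c, HasSum (fun b => f (b, c)) (h c)) (ha : HasSum g a) : HasSum h a := by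
  have hsum : Summable f :=
    (summable_prod_of_nonneg hf).2 ⟨fun b => (hg b).summable, by
      simpa only [(hg _).tsum_eq] using ha.summable⟩
  have htotal : HasSum f a := by
    rw [← (hsum.hasSum.prod_fiberwise hg).unique ha]
    exact hsum.hasSum
  exact ((Equiv.prodComm γ β).hasSum_iff.2 htotal).prod_fiberwise hh

theorem hasSum_add_two_sq_mul_one_div_two_mul_pow (m : ℕ) :
    HasSum (fun k : ℕ => ((k : ℝ) + 2) ^ 2 * (1 / (2 * ((m : ℝ) + 1))) ^ (k + 2))
      (1 / (2 * (m : ℝ) + 1) - 1 / (2 * (m : ℝ) + 2)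
        + 3 / (2 * (m : ℝ) + 1) ^ 2 + 2 / (2 * (m : ℝ) + 1) ^ 3) := by
  set r : ℝ := 1 / (2 * ((m : ℝ) + 1)) with hr_def
  have hr : ‖r‖ < 1 := by
    rw [hr_def, norm_div, norm_one, Real.norm_of_nonneg (by positivity), div_lt_one (by positivity)]
    linarith [(m.cast_nonneg : (0 : ℝ) ≤ m)]
  have hval : r * (1 + r) / (1 - r) ^ 3 - r = 1 / (2 * (m : ℝ) + 1) - 1 / (2 * (m : ℝ) + 2)
      + 3 / (2 * (m : ℝ) + 1) ^ 2 + 2 / (2 * (m : ℝ) + 1) ^ 3 := by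
    rw [show 1 - r = (2 * m + 1) / (2 * (m + 1)) by rw [hr_def]; field_simp; ring, hr_def]
    field_simp
    ring
  exact hval ▸ hasSum_sq_mul_geometric_add_two hr

theorem sum_sq_mul_zeta_div_two_pow :
    HasSum (fun k : ℕ => ((k : ℝ) + 2) ^ 2 * zetaNat (k + 2) / 2 ^ (k + 2))
      (Real.log 2 + 9 / 4 * zetaNat 2 + 14 / 8 * zetaNat 3) := by
  refine HasSum.of_hasSum_prod_fiberwise_of_nonneg
    (f := fun p : ℕ × ℕ => ((p.2 : ℝ) + 2) ^ 2 * (1 / (2 * ((p.1 : ℝ) + 1))) ^ (p.2 + 2))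
    (fun p => by positivity) hasSum_add_two_sq_mul_one_div_two_mul_pow (fun k => ?row) ?total
  case row =>
    rw [← div_mul_eq_mul_div]
    refine ((hasSum_one_div_nat_add_one_pow (s := k + 2) (by omega)).mul_left _).congr_fun
      fun m => ?_
    rw [div_pow, mul_pow, one_pow]
    field_simp
  case total =>
    have h := (hasSum_one_div_sub_one_div_log_two.add
      ((hasSum_one_div_two_mul_add_one_pow (s := 2) (by norm_num)).mul_left 3)).add
      ((hasSum_one_div_two_mul_add_one_pow (s := 3) (by norm_num)).mul_left 2)
    convert h using 1
    · ext m
      ring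
    · ring
end

section
/- For every natural number n, \sum_{k=2}^{\infty} \zeta(k) k^n / 2^k = \log 2 + \sum_{k=1}^{n} S(n+1, k+1) * k! * (1 - 2^{-k-1}) * \zeta(k+1), where S denotes Stirling numbers of the second kind and \zeta is the Riemann zeta function. -/
/-!
Expand `ζ(k + 2) = ∑ₘ (m + 1)^{-(k+2)}` and exchange the two sums, which is legitimate because
every term is nonnegative. For fixed `m` put `x = 1 / (2m + 2)`; then `x / (1 - x) = 1 / (2m + 1)`.
Writing `(k + 1)^n = ∑ⱼ S(n + 1, j + 1) j! C(k, j)` and using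
`∑ₖ C(k, j) x^{k+1} = (x / (1 - x))^{j+1}`, the inner sum `∑ₖ (k + 2)^n x^{k+2}` becomes
`1/(2m+1) - 1/(2m+2) + ∑_{j=1}^n S(n+1, j+1) j! (2m+1)^{-(j+1)}`. Summing over `m`, the first
part is the alternating harmonic series `log 2`, and `∑ₘ (2m+1)^{-s} = (1 - 2^{-s}) ζ(s)`.
-/

open Finset Nat Filter Topology

theorem stirling2_eq_stirlingSecond : ∀ n k : ℕ, stirling2 n k = stirlingSecond n k
  | 0, 0 | 0, _ + 1 | _ + 1, 0 => rfl
  | n + 1, k + 1 => by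
    rw [stirling2, stirlingSecond_succ_succ, stirling2_eq_stirlingSecond n k,
      stirling2_eq_stirlingSecond n (k + 1), add_comm]

theorem Nat.succ_pow_eq_sum_stirlingSecond_mul_factorial_mul_choose (n k : ℕ) :
    (k + 1) ^ n = ∑ j ∈ range (n + 1), stirlingSecond (n + 1) (j + 1) * j ! * k.choose j := by
  induction n with
  | zero => simp [stirlingSecond_one_right]
  | succ n ih =>
    set S := stirlingSecond (n + 1)
    have hS_top : S (n + 2) = 0 := stirlingSecond_eq_zero_of_lt (lt_add_one _)
    have hS_zero : S 0 = 0 := rfl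
    have step (j : ℕ) : j ! * k.choose j * (k + 1) = (j + 1)! * (k + 1).choose (j + 1) := by
      rw [mul_assoc, mul_comm _ (k + 1), add_one_mul_choose_eq, factorial_succ]
      ring
    calc (k + 1) ^ (n + 1)
        = ∑ j ∈ range (n + 1), (j + 1) * S (j + 1) * j ! * k.choose j
          + ∑ j ∈ range (n + 1), S (j + 1) * (j + 1)! * k.choose (j + 1) := by
          rw [pow_succ, ih, sum_mul, ← sum_add_distrib]
          refine sum_congr rfl fun j _ ↦ ?_
          rw [mul_assoc (S _), mul_assoc (S _), step, choose_succ_succ', factorial_succ]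
          ring
      _ = ∑ j ∈ range (n + 2), (j + 1) * S (j + 1) * j ! * k.choose j
          + ∑ j ∈ range (n + 2), S j * j ! * k.choose j := by
          rw [sum_range_succ _ (n + 1), sum_range_succ' _ (n + 1), hS_top, hS_zero]
          simp only [mul_zero, zero_mul, add_zero]
      _ = ∑ j ∈ range (n + 2), stirlingSecond (n + 2) (j + 1) * j ! * k.choose j := by
          rw [← sum_add_distrib]
          refine sum_congr rfl fun j _ ↦ ?_
          rw [stirlingSecond_succ_succ]
          ring

section PowerSeries

variable {𝕜 : Type*} [NormedField 𝕜] {x : 𝕜}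

theorem hasSum_choose_mul_pow_succ (j : ℕ) (hx : ‖x‖ < 1) :
    HasSum (fun k : ℕ ↦ (k.choose j : 𝕜) * x ^ (k + 1)) ((x / (1 - x)) ^ (j + 1)) := by
  have h := (hasSum_choose_mul_geometric_of_norm_lt_one j hx).mul_left (x ^ (j + 1))
  rw [div_pow, div_eq_mul_one_div, ← (add_left_injective j).hasSum_iff fun k hk ↦ ?_]
  · refine h.congr_fun fun k ↦ ?_
    simp only [Function.comp_apply]
    ring
  · have hkj : k < j := by
      by_contra! hjk
      exact hk ⟨k - j, Nat.sub_add_cancel hjk⟩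
    simp [choose_eq_zero_of_lt hkj]

theorem hasSum_succ_pow_mul_pow_succ (n : ℕ) (hx : ‖x‖ < 1) :
    HasSum (fun k : ℕ ↦ ((k : 𝕜) + 1) ^ n * x ^ (k + 1))
      (∑ j ∈ range (n + 1),
        (stirlingSecond (n + 1) (j + 1) * j ! : 𝕜) * (x / (1 - x)) ^ (j + 1)) := by
  refine (hasSum_sum fun j _ ↦ (hasSum_choose_mul_pow_succ j hx).mul_left _).congr_fun fun k ↦ ?_
  have h := congrArg (Nat.cast : ℕ → 𝕜)
    (succ_pow_eq_sum_stirlingSecond_mul_factorial_mul_choose n k)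
  push_cast at h
  simp_rw [h, sum_mul, mul_assoc]

theorem hasSum_add_two_pow_mul_pow_add_two (n : ℕ) (hx : ‖x‖ < 1) :
    HasSum (fun k : ℕ ↦ ((k : 𝕜) + 2) ^ n * x ^ (k + 2))
      (x / (1 - x) - x + ∑ j ∈ Icc 1 n,
        (stirlingSecond (n + 1) (j + 1) * j ! : 𝕜) * (x / (1 - x)) ^ (j + 1)) := by
  have h := (hasSum_nat_add_iff' (f := fun k : ℕ ↦ ((k : 𝕜) + 1) ^ n * x ^ (k + 1)) 1).mpr
    (hasSum_succ_pow_mul_pow_succ n hx)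
  have hval : x / (1 - x) - x + ∑ j ∈ Icc 1 n,
        (stirlingSecond (n + 1) (j + 1) * j ! : 𝕜) * (x / (1 - x)) ^ (j + 1) =
      ∑ j ∈ range (n + 1), (stirlingSecond (n + 1) (j + 1) * j ! : 𝕜) * (x / (1 - x)) ^ (j + 1)
        - ∑ i ∈ range 1, ((i : 𝕜) + 1) ^ n * x ^ (i + 1) := by
    rw [range_eq_Ico, sum_eq_sum_Ico_succ_bot (Nat.succ_pos n), succ_eq_add_one,
      Ico_add_one_right_eq_Icc]
    simp only [zero_add, stirlingSecond_one_right, cast_one, factorial_zero, mul_one, pow_one,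
      one_mul, sum_range_one, cast_zero, one_pow]
    ring
  rw [hval]
  refine h.congr_fun fun k ↦ ?_
  push_cast
  ring

end PowerSeries

theorem hasSum_zetaNat {s : ℕ} (hs : 1 < s) :
    HasSum (fun m : ℕ ↦ 1 / ((m : ℝ) + 1) ^ s) (zetaNat s) := by
  refine Summable.hasSum ?_
  have := (summable_nat_add_iff 1).mpr (Real.summable_one_div_nat_pow.mpr hs)
  exact_mod_cast this

theorem hasSum_one_div_odd_pow {s : ℕ} (hs : 1 < s) :
    HasSum (fun m : ℕ ↦ (1 / (2 * (m : ℝ) + 1)) ^ s) ((1 - 2 ^ (-(s : ℤ))) * zetaNat s) := by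
  set f : ℕ → ℝ := fun m ↦ 1 / ((m : ℝ) + 1) ^ s
  have hf : HasSum f (zetaNat s) := hasSum_zetaNat hs
  have hdenom_even : HasSum (fun m ↦ f (2 * m + 1)) (2 ^ (-(s : ℤ)) * zetaNat s) := by
    refine (hf.mul_left _).congr_fun fun m ↦ ?_
    simp only [f, zpow_neg, zpow_natCast]
    push_cast
    rw [show (2 : ℝ) * m + 1 + 1 = 2 * (m + 1) by ring, mul_pow, one_div, one_div, mul_inv]
  have hdenom_odd : HasSum (fun m ↦ f (2 * m)) (∑' m, f (2 * m)) :=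
    (hf.summable.comp_injective (mul_right_injective₀ two_ne_zero)).hasSum
  have hsplit : ∑' m, f (2 * m) + 2 ^ (-(s : ℤ)) * zetaNat s = zetaNat s :=
    (hdenom_odd.even_add_odd hdenom_even).unique hf
  rw [show (1 - 2 ^ (-(s : ℤ))) * zetaNat s = ∑' m, f (2 * m) by linarith]
  exact hdenom_odd.congr_fun fun m ↦ by simp [f]

theorem sum_range_one_div_odd_sub_one_div_even (M : ℕ) :
    ∑ m ∈ range M, (1 / (2 * (m : ℝ) + 1) - 1 / (2 * m + 2)) = harmonic (2 * M) - harmonic M := by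
  induction M with
  | zero => simp
  | succ M ih =>
    rw [sum_range_succ, ih, show 2 * (M + 1) = 2 * M + 1 + 1 by ring, harmonic_succ,
      harmonic_succ, harmonic_succ]
    push_cast
    field_simp
    ring

theorem hasSum_one_div_odd_sub_one_div_even :
    HasSum (fun m : ℕ ↦ 1 / (2 * (m : ℝ) + 1) - 1 / (2 * m + 2)) (Real.log 2) := by
  refine (hasSum_iff_tendsto_nat_of_nonneg (fun m ↦ ?_) _).mpr ?_
  · exact sub_nonneg.mpr (one_div_le_one_div_of_le (by positivity) (by linarith))
  simp_rw [sum_range_one_div_odd_sub_one_div_even]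
  have h2M : Tendsto (fun M : ℕ ↦ 2 * M) atTop atTop := tendsto_id.const_mul_atTop' two_pos
  have := ((Real.tendsto_harmonic_sub_log.comp h2M).sub Real.tendsto_harmonic_sub_log).add_const
    (Real.log 2)
  rw [sub_self, zero_add] at this
  refine this.congr' ?_
  filter_upwards [eventually_ne_atTop 0] with M hM
  simp only [Function.comp_apply, Nat.cast_mul, Nat.cast_ofNat]
  rw [Real.log_mul two_ne_zero (by exact_mod_cast hM)]
  ring

theorem hasSum_comm_of_nonneg {β γ : Type*} {f : β × γ → ℝ} (hf : 0 ≤ f)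
    {g : β → ℝ} {h : γ → ℝ} {a : ℝ} (hg : ∀ b, HasSum (fun c ↦ f (b, c)) (g b))
    (ha : HasSum g a) (hh : ∀ c, HasSum (fun b ↦ f (b, c)) (h c)) : HasSum h a := by
  have hsum : Summable f := (summable_prod_of_nonneg hf).mpr
    ⟨fun b ↦ (hg b).summable, ha.summable.congr fun b ↦ (hg b).tsum_eq.symm⟩
  have hf_a : HasSum f a := (hsum.hasSum.prod_fiberwise hg).unique ha ▸ hsum.hasSum
  exact ((Equiv.prodComm γ β).hasSum_iff.mpr hf_a).prod_fiberwise hh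

theorem sum_zeta_mul_pow_div_two_pow (n : ℕ) :
    HasSum (fun k : ℕ => zetaNat (k + 2) * ((k : ℝ) + 2) ^ n / 2 ^ (k + 2))
      (Real.log 2 + ∑ k ∈ Finset.Icc 1 n,
        (stirling2 (n + 1) (k + 1) : ℝ) * (Nat.factorial k : ℝ) *
          (1 - (2 : ℝ) ^ (-(k : ℤ) - 1)) * zetaNat (k + 1)) := by
  have hx (m : ℕ) : ‖1 / (2 * (m : ℝ) + 2)‖ < 1 := by
    rw [Real.norm_of_nonneg (by positivity), div_lt_one (by positivity)]
    linarith [m.cast_nonneg (α := ℝ)]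
  have hx' (m : ℕ) : 1 / (2 * (m : ℝ) + 2) / (1 - 1 / (2 * m + 2)) = 1 / (2 * m + 1) := by
    rw [one_sub_div (by positivity), div_div_div_cancel_right₀ (by positivity)]
    ring
  have hrow (m : ℕ) := hasSum_add_two_pow_mul_pow_add_two n (hx m)
  have hf : 0 ≤ fun p : ℕ × ℕ ↦ ((p.2 : ℝ) + 2) ^ n * (1 / (2 * (p.1 : ℝ) + 2)) ^ (p.2 + 2) :=
    fun p ↦ by positivity
  refine hasSum_comm_of_nonneg hf hrow ?_ fun k ↦ ?_
  · simp only [hx']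
    refine hasSum_one_div_odd_sub_one_div_even.add (hasSum_sum fun k hk ↦ ?_)
    have := (hasSum_one_div_odd_pow (lt_add_one_of_le (mem_Icc.mp hk).1)).mul_left
      (stirlingSecond (n + 1) (k + 1) * k ! : ℝ)
    rwa [stirling2_eq_stirlingSecond, mul_assoc, show -(k : ℤ) - 1 = -((k + 1 : ℕ) : ℤ) by push_cast; ring]
  · rw [mul_div_assoc, mul_comm]
    refine ((hasSum_zetaNat (s := k + 2) (by omega)).mul_left _).congr_fun fun m ↦ ?_
    rw [div_eq_mul_one_div _ (2 ^ _), mul_assoc, one_div_mul_one_div, ← mul_pow, ← one_div_pow]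
    ring
end

section
/- For natural numbers n, m with m > 0 and \beta a nonzero real, r real: \sum_{j=0}^{m-1}(r+\beta j)^n = \sum_{k=0}^n W_{\beta,r}(n,k) \beta^k (m)_{k+1}/(k+1), where W_{\beta,r}(n,k) are the r-Whitney numbers of the second kind and (m)_{k+1} is the falling factorial. -/
lemma sum_descFactorial_mul (k m : ℕ) :
    ∑ j ∈ Finset.range m, j.descFactorial k * (k + 1) = m.descFactorial (k + 1) := by
  induction m with
  | zero => simp
  | succ m ih =>
      rw [Finset.sum_range_succ, ih, Nat.succ_descFactorial_succ, Nat.descFactorial_succ]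
      rcases le_or_gt k m with h | h
      · have : m - k + (k + 1) = m + 1 := by omega
        nlinarith [Nat.sub_add_cancel h]
      · simp [Nat.descFactorial_eq_zero_iff_lt.mpr h]

theorem sum_pow_arith_eq_sum_whitney (n m : ℕ) (hm : 0 < m) (β r : ℝ) (hβ : β ≠ 0)
    (W : ℕ → ℕ → ℝ)
    (hW : ∀ N M : ℕ, (β * (M : ℝ) + r) ^ N =
      ∑ k ∈ Finset.range (N + 1), W N k * β ^ k * (M.descFactorial k : ℝ)) :
    ∑ j ∈ Finset.range m, (r + β * (j : ℝ)) ^ n =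
      ∑ k ∈ Finset.range (n + 1),
        W n k * β ^ k * (m.descFactorial (k + 1) : ℝ) / ((k : ℝ) + 1) := by
  have h1 : ∀ j : ℕ, (r + β * (j : ℝ)) ^ n =
      ∑ k ∈ Finset.range (n + 1), W n k * β ^ k * (j.descFactorial k : ℝ) := by
    intro j; rw [← hW n j]; ring_nf
  calc ∑ j ∈ Finset.range m, (r + β * (j : ℝ)) ^ n
      = ∑ j ∈ Finset.range m, ∑ k ∈ Finset.range (n + 1),
          W n k * β ^ k * (j.descFactorial k : ℝ) := by
        exact Finset.sum_congr rfl fun j _ => h1 j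
    _ = ∑ k ∈ Finset.range (n + 1), ∑ j ∈ Finset.range m,
          W n k * β ^ k * (j.descFactorial k : ℝ) := Finset.sum_comm
    _ = _ := by
        refine Finset.sum_congr rfl fun k _ => ?_
        rw [← Finset.mul_sum]
        have hk : ((k : ℝ) + 1) ≠ 0 := by positivity
        have h2 := sum_descFactorial_mul k m
        have h3 : ((∑ j ∈ Finset.range m, j.descFactorial k * (k + 1) : ℕ) : ℝ)
            = ((m.descFactorial (k + 1) : ℕ) : ℝ) := by rw [h2]
        push_cast at h3
        have hsum : (∑ j ∈ Finset.range m, (j.descFactorial k : ℝ))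
            = (m.descFactorial (k + 1) : ℝ) / ((k : ℝ) + 1) := by
          rw [eq_div_iff hk, Finset.sum_mul]; exact h3
        rw [hsum, mul_div_assoc]
end

section
/- For every natural number n, nonzero reals \beta and real r, and real x with 0 \le x < 1: \sum_{k=0}^{\infty} (r + k\beta)^n x^k = \sum_{k=0}^{n} W_{\beta,r}(n,k) * \beta^k * k! * x^k / (1-x)^{k+1}, where W_{\beta,r}(n,k) are the r-Whitney numbers of the second kind. -/
lemma hasSum_descFactorial_geom (j : ℕ) {x : ℝ} (hx0 : 0 ≤ x) (hx1 : x < 1) :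
    HasSum (fun k : ℕ => (k.descFactorial j : ℝ) * x ^ k)
      ((j.factorial : ℝ) * x ^ j / (1 - x) ^ (j + 1)) := by
  have hx : ‖x‖ < 1 := by rw [Real.norm_eq_abs, abs_of_nonneg hx0]; exact hx1
  have h := (hasSum_choose_mul_geometric_of_norm_lt_one j hx).mul_left
    ((j.factorial : ℝ) * x ^ j)
  have h2 : HasSum (fun k : ℕ => ((k + j).descFactorial j : ℝ) * x ^ (k + j))
      ((j.factorial : ℝ) * x ^ j / (1 - x) ^ (j + 1)) := by
    have e1 : ∀ k : ℕ, ((k + j).descFactorial j : ℝ) * x ^ (k + j) =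
        (j.factorial : ℝ) * x ^ j * ((k + j).choose j * x ^ k) := by
      intro k
      rw [Nat.descFactorial_eq_factorial_mul_choose (k + j) j]
      push_cast
      rw [pow_add]
      ring
    simp only [e1]
    rw [show (j.factorial : ℝ) * x ^ j / (1 - x) ^ (j + 1) =
      (j.factorial : ℝ) * x ^ j * (1 / (1 - x) ^ (j + 1)) from (mul_one_div _ _).symm]
    exact h
  refine (hasSum_nat_add_iff' (f := fun k : ℕ => (k.descFactorial j : ℝ) * x ^ k) j).mp ?_
  have hz : ∑ i ∈ Finset.range j, (i.descFactorial j : ℝ) * x ^ i = 0 := by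
    apply Finset.sum_eq_zero
    intro i hi
    rw [Nat.descFactorial_eq_zero_iff_lt.mpr (Finset.mem_range.mp hi)]
    simp
  rw [hz, sub_zero]
  exact h2

theorem sum_pow_arith_mul_pow (n : ℕ) (β : ℝ) (hβ : β ≠ 0) (r : ℝ) (x : ℝ)
    (hx0 : 0 ≤ x) (hx1 : x < 1) (W : ℕ → ℕ → ℝ)
    (hW : ∀ N M : ℕ, (β * (M : ℝ) + r) ^ N =
      ∑ k ∈ Finset.range (N + 1), W N k * β ^ k * (M.descFactorial k : ℝ)) :
    HasSum (fun k : ℕ => (r + (k : ℝ) * β) ^ n * x ^ k)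
      (∑ k ∈ Finset.range (n + 1),
        W n k * β ^ k * (Nat.factorial k : ℝ) * x ^ k / (1 - x) ^ (k + 1)) := by
  have H : ∀ j ∈ Finset.range (n + 1),
      HasSum (fun k : ℕ => W n j * β ^ j * (k.descFactorial j : ℝ) * x ^ k)
        (W n j * β ^ j * (Nat.factorial j : ℝ) * x ^ j / (1 - x) ^ (j + 1)) := by
    intro j _
    have h := (hasSum_descFactorial_geom j hx0 hx1).mul_left (W n j * β ^ j)
    have e1 : ∀ k : ℕ, W n j * β ^ j * ((k.descFactorial j : ℝ) * x ^ k) =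
        W n j * β ^ j * (k.descFactorial j : ℝ) * x ^ k := fun k => by ring
    simp only [e1] at h
    rw [show W n j * β ^ j * ((j.factorial : ℝ) * x ^ j / (1 - x) ^ (j + 1)) =
      W n j * β ^ j * (j.factorial : ℝ) * x ^ j / (1 - x) ^ (j + 1) by ring] at h
    exact h
  have h := hasSum_sum H
  have e2 : ∀ k : ℕ, (∑ j ∈ Finset.range (n + 1),
      W n j * β ^ j * (k.descFactorial j : ℝ) * x ^ k) = (r + (k : ℝ) * β) ^ n * x ^ k := by
    intro k
    rw [← Finset.sum_mul, show r + (k : ℝ) * β = β * k + r by ring, hW n k]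
  simp only [e2] at h
  exact h
end

section
/- For natural numbers n, s and real x with 0 \le x < 1, nonzero real \beta, real r: \sum_{k=0}^{\infty} \binom{s+k}{k} (r + k\beta)^n x^k = \sum_{k=0}^{n} W_{\beta,r}(n,k) * \binom{s+k}{k} * k! * \beta^k * x^k / (1-x)^{s+k+1}. -/
/-!
Expanding `(r + kβ)^n` in the falling factorials of `k` by means of the Whitney numbers reduces
the series to the finitely many series `∑ₖ C(s+k, k) k^{(j)} x^k`. Since
`C(s+k, k) k^{(j)} = C(s+j, j) j! C(s+k, s+j)`, shifting `k = m + j` turns each of these into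
`C(s+j, j) j! x^j` times the negative binomial series `∑ₘ C(m+s+j, s+j) x^m = (1-x)^{-(s+j+1)}`.
-/

open Finset

theorem Nat.choose_mul_descFactorial_eq_choose_mul_choose_mul_factorial (s j k : ℕ) :
    (s + k).choose k * k.descFactorial j =
      (s + k).choose (s + j) * ((s + j).choose j * j.factorial) := by
  have h := Nat.choose_mul (n := s + k) (Nat.le_add_right s j)
  rw [Nat.add_sub_cancel_left, Nat.add_sub_cancel_left, Nat.choose_symm_add,
    Nat.choose_symm_add] at h
  rw [Nat.descFactorial_eq_factorial_mul_choose]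
  calc (s + k).choose k * (j.factorial * k.choose j)
      = (s + k).choose k * k.choose j * j.factorial := by ring
    _ = (s + k).choose (s + j) * (s + j).choose j * j.factorial := by rw [h]
    _ = _ := by ring

theorem hasSum_choose_mul_descFactorial_mul_geometric {𝕜 : Type*} [NormedField 𝕜] (s j : ℕ)
    {x : 𝕜} (hx : ‖x‖ < 1) :
    HasSum (fun k : ℕ => ((s + k).choose k : 𝕜) * (k.descFactorial j : 𝕜) * x ^ k)
      (((s + j).choose j : 𝕜) * (j.factorial : 𝕜) * x ^ j / (1 - x) ^ (s + j + 1)) := by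
  set c : 𝕜 := ((s + j).choose j : 𝕜) * (j.factorial : 𝕜) * x ^ j
  have hvanish :
      ∑ k ∈ range j, ((s + k).choose k : 𝕜) * (k.descFactorial j : 𝕜) * x ^ k = 0 :=
    sum_eq_zero fun k hk => by
      rw [Nat.descFactorial_eq_zero_iff_lt.mpr (mem_range.mp hk)]
      simp
  have hshift : (fun m : ℕ => ((s + (m + j)).choose (m + j) : 𝕜) *
      ((m + j).descFactorial j : 𝕜) * x ^ (m + j)) =
      fun m => c * (((m + (s + j)).choose (s + j) : 𝕜) * x ^ m) := by
    funext m
    have hcomb := Nat.choose_mul_descFactorial_eq_choose_mul_choose_mul_factorial s j (m + j)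
    rw [show s + (m + j) = m + (s + j) by ring] at hcomb ⊢
    rw [← Nat.cast_mul, hcomb]
    push_cast
    ring
  refine (hasSum_nat_add_iff' j).mp ?_
  rw [hvanish, sub_zero, hshift, div_eq_mul_one_div]
  exact (hasSum_choose_mul_geometric_of_norm_lt_one (s + j) hx).mul_left c

theorem sum_choose_mul_pow_arith_mul_pow_general (n s : ℕ) (β : ℝ) (r : ℝ) (x : ℝ)
    (hx0 : 0 ≤ x) (hx1 : x < 1) (W : ℕ → ℕ → ℝ)
    (hW : ∀ N M : ℕ, (β * (M : ℝ) + r) ^ N =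
      ∑ k ∈ Finset.range (N + 1), W N k * β ^ k * (M.descFactorial k : ℝ)) :
    HasSum (fun k : ℕ => ((s + k).choose k : ℝ) * (r + (k : ℝ) * β) ^ n * x ^ k)
      (∑ k ∈ Finset.range (n + 1),
        W n k * ((s + k).choose k : ℝ) * (Nat.factorial k : ℝ) * β ^ k * x ^ k /
          (1 - x) ^ (s + k + 1)) := by
  have hx : ‖x‖ < 1 := by rwa [Real.norm_of_nonneg hx0]
  have hexpand : ∀ k : ℕ, ((s + k).choose k : ℝ) * (r + (k : ℝ) * β) ^ n * x ^ k =
      ∑ j ∈ range (n + 1),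
        W n j * β ^ j * (((s + k).choose k : ℝ) * (k.descFactorial j : ℝ) * x ^ k) := by
    intro k
    rw [add_comm r, mul_comm (k : ℝ), hW n k, mul_sum, sum_mul]
    exact sum_congr rfl fun j _ => by ring
  have hsum : ∑ j ∈ range (n + 1), W n j * ((s + j).choose j : ℝ) * (j.factorial : ℝ) *
      β ^ j * x ^ j / (1 - x) ^ (s + j + 1) = ∑ j ∈ range (n + 1), W n j * β ^ j *
        (((s + j).choose j : ℝ) * (j.factorial : ℝ) * x ^ j / (1 - x) ^ (s + j + 1)) :=
    sum_congr rfl fun j _ => by ring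
  simp_rw [hexpand, hsum]
  exact hasSum_sum fun j _ =>
    (hasSum_choose_mul_descFactorial_mul_geometric s j hx).mul_left (W n j * β ^ j)

theorem sum_choose_mul_pow_arith_mul_pow (n s : ℕ) (β : ℝ) (hβ : β ≠ 0) (r : ℝ) (x : ℝ)
    (hx0 : 0 ≤ x) (hx1 : x < 1) (W : ℕ → ℕ → ℝ)
    (hW : ∀ N M : ℕ, (β * (M : ℝ) + r) ^ N =
      ∑ k ∈ Finset.range (N + 1), W N k * β ^ k * (M.descFactorial k : ℝ)) :
    HasSum (fun k : ℕ => ((s + k).choose k : ℝ) * (r + (k : ℝ) * β) ^ n * x ^ k)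
      (∑ k ∈ Finset.range (n + 1),
        W n k * ((s + k).choose k : ℝ) * (Nat.factorial k : ℝ) * β ^ k * x ^ k /
          (1 - x) ^ (s + k + 1)) :=
  sum_choose_mul_pow_arith_mul_pow_general n s β r x hx0 hx1 W hW
end

section
/- For every natural number n, nonzero real \beta, real r, and natural number s: the n-th higher-order Euler polynomial value E_n^{(s)}(r/\beta) satisfies E_n^{(s)}(r/\beta) = \sum_{k=0}^{n} W_{\beta,r}(n,k) * (-1)^k * \langle s \rangle_k / (\beta^{n-k} 2^k), where \langle s \rangle_k is the rising factorial. -/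
/-- The higher order Euler polynomials `E_n^{(s)}(x)`, with generating function
`(2/(e^t+1))^s e^{xt}`, defined as the `s`-fold binomial convolution of the Euler
numbers `E_k(0)` with `x^n`. -/
noncomputable def eulerPolyH : ℕ → ℕ → ℝ → ℝ
  | 0, n, x => x ^ n
  | s + 1, n, x =>
      ∑ k ∈ Finset.range (n + 1), (n.choose k : ℝ) * eulerPoly k 0 * eulerPolyH s (n - k) x

open Finset PowerSeries fwdDiff

-- `Δ_[1] ^[k]` needs the space: `]^` is a token of Mathlib's exterior-power notation.

lemma sum_range_sum_range_eq_sum_antidiagonal {M : Type*} [AddCommMonoid M] {N : ℕ}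
    {f : ℕ → ℕ → M} (hf : ∀ m l, N ≤ m + l → f m l = 0) :
    ∑ m ∈ range N, ∑ l ∈ range N, f m l = ∑ k ∈ range N, ∑ p ∈ antidiagonal k, f p.1 p.2 := by
  calc _ = ∑ m ∈ range N, ∑ l ∈ range (N - m), f m l := by
        refine sum_congr rfl fun m hm ↦ (sum_subset ?_ fun l _ hl ↦ ?_).symm
        · exact range_subset_range.2 (Nat.sub_le _ _)
        · simp only [mem_range] at hm hl
          exact hf m l (by omega)
    _ = ∑ k ∈ range N, ∑ j ∈ range (k + 1), f j (k - j) := (sum_range_diag_flip N f).symm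
    _ = _ := by simp_rw [Nat.sum_antidiagonal_eq_sum_range_succ f]

lemma fwdDiff_iter_comp_natCast_add {M G : Type*} [AddCommMonoidWithOne M] [AddCommGroup G]
    (f : M → G) (k : ℕ) (y : M) :
    Δ_[1] ^[k] (fun j : ℕ ↦ f (y + j)) 0 = Δ_[1] ^[k] f y := by
  simp [fwdDiff_iter_eq_sum_shift]

lemma fwdDiff_iter_descFactorial_zero {R : Type*} [Ring R] (k m : ℕ) :
    Δ_[1] ^[k] (fun j : ℕ ↦ (j.descFactorial m : R)) 0 =
      if k = m then (k.factorial : R) else 0 := by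
  have hchoose : Δ_[1] ^[k] (fun j : ℕ ↦ (j.choose m : R)) 0 = if k = m then 1 else 0 := by
    have h := congrArg (Int.cast : ℤ → R) (fwdDiff_iter_choose_zero m k)
    rw [fwdDiff_iter_eq_sum_shift] at h ⊢
    push_cast [smul_eq_mul, zsmul_eq_mul] at h ⊢
    exact h
  have hdesc : (fun j : ℕ ↦ (j.descFactorial m : R)) =
      (m.factorial : R) • fun j : ℕ ↦ (j.choose m : R) := by
    ext j
    simp [Nat.descFactorial_eq_factorial_mul_choose]
  rw [hdesc, fwdDiff_iter_const_smul, Pi.smul_apply, hchoose]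
  split_ifs with hkm <;> simp [hkm]

section
variable {R : Type*} [CommRing R]

lemma fwdDiff_pow (n : ℕ) :
    Δ_[1] (fun x : R ↦ x ^ n) = ∑ c ∈ range n, n.choose c • fun x : R ↦ x ^ c := by
  ext x
  simp [nsmul_eq_mul, fwdDiff, add_pow, sum_range_succ, mul_comm]

lemma sum_range_choose_mul_fwdDiff_iter_pow (m n : ℕ) (x : R) :
    ∑ c ∈ range n, n.choose c * Δ_[1] ^[m] (· ^ c) x = Δ_[1] ^[m + 1] (· ^ n) x := by
  rw [Function.iterate_succ_apply, fwdDiff_pow, fwdDiff_iter_finsetSum, Finset.sum_apply]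
  simp_rw [fwdDiff_iter_const_smul, Pi.smul_apply, nsmul_eq_mul]

lemma fwdDiff_iter_pow_add (l n : ℕ) (x y : R) :
    Δ_[1] ^[l] (· ^ n) (x + y) =
      ∑ c ∈ range (n + 1), n.choose c * y ^ c * Δ_[1] ^[l] (· ^ (n - c)) x := by
  have hexpand : (fun z : R ↦ (z + y) ^ n) =
      ∑ c ∈ range (n + 1), (n.choose c * y ^ c) • fun z : R ↦ z ^ (n - c) := by
    ext z
    simp [add_comm z y, add_pow, mul_comm, mul_left_comm, mul_assoc]
  rw [← fwdDiff_iter_comp_add, hexpand, fwdDiff_iter_finsetSum, Finset.sum_apply]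
  simp

lemma sum_choose_mul_fwdDiff_iter_pow (m l n : ℕ) (x : R) :
    ∑ c ∈ range (n + 1), n.choose c * Δ_[1] ^[m] (· ^ c) 0 * Δ_[1] ^[l] (· ^ (n - c)) x =
      Δ_[1] ^[m + l] (· ^ n) x := by
  have hexpand : (fun y : R ↦ Δ_[1] ^[l] (· ^ n) (y + x)) =
      ∑ c ∈ range (n + 1), (n.choose c * Δ_[1] ^[l] (· ^ (n - c)) x) • fun y : R ↦ y ^ c := by
    ext y
    simp [add_comm y x, fwdDiff_iter_pow_add, mul_comm, mul_assoc]
  calc _ = Δ_[1] ^[m] (fun y : R ↦ Δ_[1] ^[l] (· ^ n) (y + x)) 0 := by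
        rw [hexpand, fwdDiff_iter_finsetSum, Finset.sum_apply]
        simp only [fwdDiff_iter_const_smul, Pi.smul_apply, smul_eq_mul]
        exact sum_congr rfl fun c _ ↦ by ring
    _ = Δ_[1] ^[m + l] (· ^ n) x := by
        rw [fwdDiff_iter_comp_add, zero_add, Function.iterate_add_apply]

/-- `A(Δ)` applied to `x ↦ x ^ n`; the sum stops at `n` because `Δ^[k]` kills `x ^ n` for
`k > n`. -/
noncomputable def fwdDiffSum (A : R⟦X⟧) (n : ℕ) (x : R) : R :=
  ∑ k ∈ range (n + 1), coeff k A * Δ_[1] ^[k] (· ^ n) x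

lemma fwdDiffSum_eq_sum_range (A : R⟦X⟧) {n N : ℕ} (h : n < N) (x : R) :
    fwdDiffSum A n x = ∑ k ∈ range N, coeff k A * Δ_[1] ^[k] (· ^ n) x := by
  refine sum_subset (range_subset_range.2 h) fun k _ hk ↦ ?_
  rw [fwdDiff_iter_pow_eq_zero_of_lt (by simpa using hk), Pi.zero_apply, mul_zero]

lemma fwdDiffSum_one (n : ℕ) (x : R) : fwdDiffSum 1 n x = x ^ n := by
  rw [fwdDiffSum, sum_eq_single_of_mem 0 (by simp)]
  · simp
  · intro k _ hk
    simp [coeff_one, hk]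

lemma sum_choose_mul_fwdDiffSum (A B : R⟦X⟧) (n : ℕ) (x : R) :
    ∑ c ∈ range (n + 1), n.choose c * fwdDiffSum A c 0 * fwdDiffSum B (n - c) x =
      fwdDiffSum (A * B) n x := by
  have hexpand : ∀ c ∈ range (n + 1), n.choose c * fwdDiffSum A c 0 * fwdDiffSum B (n - c) x =
      ∑ m ∈ range (n + 1), ∑ l ∈ range (n + 1), coeff m A * coeff l B *
        (n.choose c * Δ_[1] ^[m] (· ^ c) 0 * Δ_[1] ^[l] (· ^ (n - c)) x) := fun c hc ↦ by
    rw [fwdDiffSum_eq_sum_range A (mem_range.1 hc), fwdDiffSum_eq_sum_range B (N := n + 1)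
      (by omega), mul_assoc, sum_mul_sum]
    simp only [mul_sum]
    exact sum_congr rfl fun m _ ↦ sum_congr rfl fun l _ ↦ by ring
  calc _ = ∑ m ∈ range (n + 1), ∑ l ∈ range (n + 1),
          coeff m A * coeff l B * Δ_[1] ^[m + l] (· ^ n) x := by
        rw [sum_congr rfl hexpand, sum_comm]
        refine sum_congr rfl fun m _ ↦ ?_
        rw [sum_comm]
        simp_rw [← mul_sum, sum_choose_mul_fwdDiff_iter_pow]
    _ = ∑ k ∈ range (n + 1), ∑ p ∈ antidiagonal k,
          coeff p.1 A * coeff p.2 B * Δ_[1] ^[p.1 + p.2] (· ^ n) x := by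
        refine sum_range_sum_range_eq_sum_antidiagonal fun m l h ↦ ?_
        rw [fwdDiff_iter_pow_eq_zero_of_lt h, Pi.zero_apply, mul_zero]
    _ = _ := by
        refine sum_congr rfl fun k _ ↦ ?_
        rw [coeff_mul, sum_mul]
        exact sum_congr rfl fun p hp ↦ by rw [mem_antidiagonal.1 hp]

end

/-- `(1 + X/2)⁻¹`, which is `2 / (e^t + 1)` in the variable `X = e^t - 1`. -/
noncomputable def eulerSeries : ℝ⟦X⟧ := rescale (-2⁻¹) (mk 1)

lemma coeff_eulerSeries (k : ℕ) : coeff k eulerSeries = (-2⁻¹) ^ k := by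
  simp [eulerSeries, coeff_rescale]

lemma coeff_eulerSeries_pow (s k : ℕ) :
    coeff k (eulerSeries ^ s) = (-2⁻¹) ^ k * (ascPochhammer ℝ k).eval (s : ℝ) / k.factorial := by
  rw [eulerSeries, ← map_pow, coeff_rescale, mul_div_assoc]
  congr 1
  rcases s with _ | d
  · rcases k with _ | k <;> simp [coeff_one]
  · rw [mk_one_pow_eq_mk_choose_add, coeff_mk, ← ascPochhammer_eval_cast,
      ascPochhammer_nat_eq_ascFactorial, Nat.ascFactorial_eq_factorial_mul_choose,
      Nat.choose_symm_add]
    field_simp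
    push_cast
    ring

lemma eulerPoly_eq_fwdDiffSum (n : ℕ) (x : ℝ) : eulerPoly n x = fwdDiffSum eulerSeries n x := by
  induction n using Nat.strong_induction_on with
  | _ n ih =>
    have hsum : ∑ k ∈ range n, n.choose k * eulerPoly k x =
        ∑ m ∈ range (n + 1), (-2⁻¹) ^ m * Δ_[1] ^[m + 1] (· ^ n) x := by
      calc _ = ∑ k ∈ range n, ∑ m ∈ range (n + 1),
              (-2⁻¹) ^ m * (n.choose k * Δ_[1] ^[m] (· ^ k) x) := by
            refine sum_congr rfl fun k hk ↦ ?_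
            have hk : k < n := mem_range.1 hk
            rw [ih k hk, fwdDiffSum_eq_sum_range _ (N := n + 1) (by omega), mul_sum]
            exact sum_congr rfl fun m _ ↦ by rw [coeff_eulerSeries]; ring
        _ = _ := by
            rw [sum_comm]
            simp_rw [← mul_sum, sum_range_choose_mul_fwdDiff_iter_pow]
    calc eulerPoly n x
        = x ^ n - 2⁻¹ * ∑ m ∈ range (n + 1), (-2⁻¹) ^ m * Δ_[1] ^[m + 1] (· ^ n) x := by
          rw [eulerPoly, sum_attach (range n) (fun k ↦ (n.choose k : ℝ) * eulerPoly k x), hsum]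
      _ = ∑ m ∈ range (n + 2), (-2⁻¹) ^ m * Δ_[1] ^[m] (· ^ n) x := by
          rw [sum_range_succ' _ (n + 1), mul_sum, sub_eq_add_neg, ← sum_neg_distrib, add_comm]
          simp only [pow_zero, one_mul, Function.iterate_zero, id_eq]
          exact congrArg (· + x ^ n) (sum_congr rfl fun m _ ↦ by ring)
      _ = fwdDiffSum eulerSeries n x := by
          rw [fwdDiffSum_eq_sum_range eulerSeries (N := n + 2) (by omega)]
          simp only [coeff_eulerSeries]

lemma eulerPolyH_eq_fwdDiffSum (s n : ℕ) (x : ℝ) :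
    eulerPolyH s n x = fwdDiffSum (eulerSeries ^ s) n x := by
  induction s generalizing n with
  | zero => rw [eulerPolyH, pow_zero, fwdDiffSum_one]
  | succ s ih =>
    simp only [eulerPolyH, eulerPoly_eq_fwdDiffSum, ih]
    rw [pow_succ', sum_choose_mul_fwdDiffSum]

lemma fwdDiff_iter_pow_div_eq {K : Type*} [Field K] {β r : K} (hβ : β ≠ 0) {n : ℕ} (W : ℕ → K)
    (hW : ∀ M : ℕ, (β * M + r) ^ n = ∑ k ∈ range (n + 1), W k * β ^ k * M.descFactorial k)
    {k : ℕ} (hk : k ≤ n) :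
    Δ_[1] ^[k] (· ^ n) (r / β) = W k * k.factorial / β ^ (n - k) := by
  have hexpand : (β ^ n • fun j : ℕ ↦ (r / β + j) ^ n) =
      ∑ i ∈ range (n + 1), (W i * β ^ i) • fun j : ℕ ↦ (j.descFactorial i : K) := by
    ext j
    rw [Pi.smul_apply, smul_eq_mul, ← mul_pow, mul_add, mul_div_cancel₀ _ hβ, add_comm, hW,
      Finset.sum_apply]
    simp [mul_assoc]
  have hscaled : β ^ n * Δ_[1] ^[k] (· ^ n) (r / β) = W k * β ^ k * k.factorial := calc
    _ = Δ_[1] ^[k] (β ^ n • fun j : ℕ ↦ (r / β + j) ^ n) 0 := by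
        rw [fwdDiff_iter_const_smul, Pi.smul_apply, smul_eq_mul,
          fwdDiff_iter_comp_natCast_add (· ^ n)]
    _ = ∑ i ∈ range (n + 1), W i * β ^ i * if k = i then (k.factorial : K) else 0 := by
        rw [hexpand, fwdDiff_iter_finsetSum, Finset.sum_apply]
        simp only [fwdDiff_iter_const_smul, Pi.smul_apply, smul_eq_mul,
          fwdDiff_iter_descFactorial_zero]
    _ = W k * β ^ k * k.factorial := by
        simp [mem_range, Nat.lt_succ_iff.2 hk]
  rw [eq_div_iff (pow_ne_zero _ hβ)]
  refine mul_left_cancel₀ (pow_ne_zero k hβ) ?_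
  rw [← pow_sub_mul_pow β hk] at hscaled
  linear_combination hscaled

theorem eulerPolyH_eq_sum_whitney (n : ℕ) (β : ℝ) (hβ : β ≠ 0) (r : ℝ) (s : ℕ)
    (W : ℕ → ℕ → ℝ)
    (hW : ∀ N M : ℕ, (β * (M : ℝ) + r) ^ N =
      ∑ k ∈ Finset.range (N + 1), W N k * β ^ k * (M.descFactorial k : ℝ)) :
    eulerPolyH s n (r / β) =
      ∑ k ∈ Finset.range (n + 1),
        W n k * (-1) ^ k * (ascPochhammer ℝ k).eval (s : ℝ) / (β ^ (n - k) * 2 ^ k) := by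
  rw [eulerPolyH_eq_fwdDiffSum, fwdDiffSum]
  refine sum_congr rfl fun k hk ↦ ?_
  have hkn : k ≤ n := Nat.lt_succ_iff.1 (mem_range.1 hk)
  rw [coeff_eulerSeries_pow, fwdDiff_iter_pow_div_eq hβ (W n) (hW n) hkn,
    show (-2⁻¹ : ℝ) ^ k = (-1) ^ k / 2 ^ k by rw [← div_pow]; norm_num]
  field_simp
end
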